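/- arXiv:2308.10101 — 2 statements merged into one kernel-verified Lean document; each statement's English description precedes it below -/
import Mathlib

section
/- (Theorem S.1) Let b_1 ≤ … ≤ b_P be sorted, a_i > 0 rearranged accordingly, and let ρ be the number of strictly positive components of the unique minimizer of θᵀ diag(a)θ + bᵀθ over the simplex. Then ρ = max{ 1 ≤ j ≤ P : b_j − (2 + ∑_{i=1}^j b_i/a_i)/(∑_{i=1}^j 1/a_i) < 0 }. -/
/-!
At a minimiser, moving a little mass from a coordinate `p` with `θ p > 0` to any other
coordinate `q` cannot decrease the objective, so the partial derivative `2 a_p θ_p + b_p`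
is minimal at `p`. Hence all these derivatives equal a common level `ν` on the support and
are at least `ν` off it, i.e. `2 a_p θ_p = max 0 (ν - b_p)` ("water filling"; `ν = -μ`).
Summing, `∑_p max 0 (ν - b_p) / a_p = 2`. For sorted `b` the left side evaluated at `b_j`
instead of `ν` is `∑_{i ≤ j} (b_j - b_i) / a_i`, and the criterion of the theorem says exactly
that this is `< 2`, i.e. that `b_j < ν`, i.e. that `θ_j > 0`; the support is an initial
segment `{1, …, ρ}`.
-/

open Finset Filter Topology

section Simplex

variable {ι : Type*} {s : Finset ι} {a b θ : ι → ℝ}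

def simplexOn (s : Finset ι) : Set (ι → ℝ) :=
  {t | (∀ i, 0 ≤ t i) ∧ (∀ i, i ∉ s → t i = 0) ∧ ∑ i ∈ s, t i = 1}

theorem exists_pos_of_mem_simplexOn (hθ : θ ∈ simplexOn s) : ∃ p ∈ s, 0 < θ p :=
  exists_lt_of_sum_lt (f := 0) (by simp [hθ.2.2])

def transfer [DecidableEq ι] (θ : ι → ℝ) (p q : ι) (ε : ℝ) : ι → ℝ :=
  Function.update (Function.update θ p (θ p - ε)) q (θ q + ε)

section Transfer

variable [DecidableEq ι] {p q : ι} {ε : ℝ}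

theorem transfer_apply_left (hpq : p ≠ q) : transfer θ p q ε p = θ p - ε := by
  simp [transfer, hpq]

theorem transfer_apply_right : transfer θ p q ε q = θ q + ε := by
  simp [transfer]

theorem transfer_apply_of_ne {i : ι} (hp : i ≠ p) (hq : i ≠ q) : transfer θ p q ε i = θ i := by
  simp [transfer, hp, hq]

theorem sum_transfer_sub_sum (F : ι → ℝ → ℝ) (hp : p ∈ s) (hq : q ∈ s) (hpq : p ≠ q) :
    ∑ i ∈ s, F i (transfer θ p q ε i) - ∑ i ∈ s, F i (θ i) =
      (F p (θ p - ε) - F p (θ p)) + (F q (θ q + ε) - F q (θ q)) := by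
  rw [← sum_sub_distrib, sum_eq_add_of_mem p q hp hq hpq fun i _ hi => by
    rw [transfer_apply_of_ne hi.1 hi.2, sub_self], transfer_apply_left hpq, transfer_apply_right]

theorem transfer_mem_simplexOn (hθ : θ ∈ simplexOn s) (hp : p ∈ s) (hq : q ∈ s) (hpq : p ≠ q)
    (hε : 0 ≤ ε) (hεp : ε ≤ θ p) : transfer θ p q ε ∈ simplexOn s := by
  obtain ⟨hθ0, hθs, hθ1⟩ := hθ
  refine ⟨fun i => ?_, fun i hi => ?_, ?_⟩
  · by_cases hip : i = p
    · rw [hip, transfer_apply_left hpq]; linarith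
    by_cases hiq : i = q
    · rw [hiq, transfer_apply_right]; linarith [hθ0 q]
    rw [transfer_apply_of_ne hip hiq]; exact hθ0 i
  · rw [transfer_apply_of_ne (ne_of_mem_of_not_mem hp hi).symm (ne_of_mem_of_not_mem hq hi).symm]
    exact hθs i hi
  · have := sum_transfer_sub_sum (θ := θ) (ε := ε) (fun _ x => x) hp hq hpq
    linarith

end Transfer

theorem nonneg_of_forall_nonneg_add_mul {c A δ : ℝ} (hδ : 0 < δ)
    (h : ∀ ε, 0 < ε → ε ≤ δ → 0 ≤ c + ε * A) : 0 ≤ c := by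
  have hlim : Tendsto (fun ε => c + ε * A) (𝓝[>] 0) (𝓝 c) := by
    have hcont : Continuous fun ε : ℝ => c + ε * A := by fun_prop
    simpa using (hcont.tendsto 0).mono_left nhdsWithin_le_nhds
  exact ge_of_tendsto hlim (eventually_of_mem (Ioo_mem_nhdsGT hδ) fun ε hε => h ε hε.1 hε.2.le)

theorem deriv_le_of_isMinOn_simplexOn
    (hmin : IsMinOn (fun t : ι → ℝ => ∑ i ∈ s, (a i * t i ^ 2 + b i * t i)) (simplexOn s) θ)
    (hθ : θ ∈ simplexOn s) {p q : ι} (hp : p ∈ s) (hq : q ∈ s) (hθp : 0 < θ p) :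
    2 * a p * θ p + b p ≤ 2 * a q * θ q + b q := by
  classical
  rcases eq_or_ne p q with rfl | hpq
  · rfl
  suffices 0 ≤ (2 * a q * θ q + b q) - (2 * a p * θ p + b p) by linarith
  refine nonneg_of_forall_nonneg_add_mul (A := a p + a q) hθp fun ε hε hεp => ?_
  have hdiff := sum_transfer_sub_sum (θ := θ) (ε := ε)
    (fun i x => a i * x ^ 2 + b i * x) hp hq hpq
  have hle : ∑ i ∈ s, (a i * θ i ^ 2 + b i * θ i) ≤
      ∑ i ∈ s, (a i * transfer θ p q ε i ^ 2 + b i * transfer θ p q ε i) :=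
    hmin (transfer_mem_simplexOn hθ hp hq hpq hε.le hεp)
  refine nonneg_of_mul_nonneg_right (a := ε) ?_ hε
  linarith

theorem exists_waterLevel_of_isMinOn_simplexOn
    (hmin : IsMinOn (fun t : ι → ℝ => ∑ i ∈ s, (a i * t i ^ 2 + b i * t i)) (simplexOn s) θ)
    (hθ : θ ∈ simplexOn s) (ha : ∀ i ∈ s, 0 ≤ a i) :
    ∃ ν, ∀ p ∈ s, 2 * a p * θ p = max 0 (ν - b p) := by
  obtain ⟨p₀, hp₀, hθp₀⟩ := exists_pos_of_mem_simplexOn hθ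
  refine ⟨2 * a p₀ * θ p₀ + b p₀, fun p hp => ?_⟩
  have hle := deriv_le_of_isMinOn_simplexOn hmin hθ hp₀ hp hθp₀
  rcases (hθ.1 p).eq_or_lt with hzero | hpos
  · rw [← hzero] at hle ⊢
    rw [max_eq_left (by linarith)]
    ring
  · have hge := deriv_le_of_isMinOn_simplexOn hmin hθ hp hp₀ hpos
    have : 0 ≤ 2 * a p * θ p := by have := ha p hp; positivity
    rw [max_eq_right (by linarith)]
    linarith

noncomputable def waterFill (s : Finset ι) (a b : ι → ℝ) (x : ℝ) : ℝ :=
  ∑ i ∈ s, max 0 (x - b i) / a i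

theorem waterFill_eq_two (ha : ∀ i ∈ s, 0 < a i) (hθ : ∑ i ∈ s, θ i = 1) {ν : ℝ}
    (hν : ∀ p ∈ s, 2 * a p * θ p = max 0 (ν - b p)) : waterFill s a b ν = 2 := by
  calc waterFill s a b ν = ∑ i ∈ s, 2 * θ i := sum_congr rfl fun i hi => by
        rw [← hν i hi]; field_simp [(ha i hi).ne']
    _ = 2 := by rw [← mul_sum, hθ, mul_one]

theorem waterFill_lt_waterFill_iff (ha : ∀ i ∈ s, 0 < a i) {j : ι} (hj : j ∈ s) {ν : ℝ} :
    waterFill s a b (b j) < waterFill s a b ν ↔ b j < ν := by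
  have hmono : ∀ {x y : ℝ}, x ≤ y → ∀ i ∈ s, max 0 (x - b i) / a i ≤ max 0 (y - b i) / a i :=
    fun hxy i hi => div_le_div_of_nonneg_right (by gcongr) (ha i hi).le
  constructor
  · intro hlt
    by_contra! hle
    exact (sum_le_sum (hmono hle)).not_gt hlt
  · intro hlt
    refine sum_lt_sum (hmono hlt.le) ⟨j, hj, ?_⟩
    rw [sub_self, max_self, zero_div]
    exact div_pos (lt_max_of_lt_right (by linarith)) (ha j hj)

theorem pos_iff_lt_of_two_mul_eq_max {a b θ ν : ℝ} (ha : 0 < a) (h : 2 * a * θ = max 0 (ν - b)) :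
    0 < θ ↔ b < ν := by
  rw [← mul_pos_iff_of_pos_left (by positivity : 0 < 2 * a), h, lt_max_iff, sub_pos]
  simp

theorem sub_div_sum_neg_iff (t : Finset ι) (hS : 0 < ∑ i ∈ t, 1 / a i) (x : ℝ) :
    x - (2 + ∑ i ∈ t, b i / a i) / (∑ i ∈ t, 1 / a i) < 0 ↔ ∑ i ∈ t, (x - b i) / a i < 2 := by
  have hsum : ∑ i ∈ t, (x - b i) / a i = x * ∑ i ∈ t, 1 / a i - ∑ i ∈ t, b i / a i := by
    rw [mul_sum, ← sum_sub_distrib]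
    exact sum_congr rfl fun i _ => by ring
  rw [sub_neg, lt_div_iff₀ hS, hsum]
  constructor <;> intro h <;> linarith

end Simplex

section Sorted

variable {P : ℕ} {a b : ℕ → ℝ}

theorem waterFill_Icc_of_sorted
    (hsort : ∀ i ∈ Icc 1 P, ∀ j ∈ Icc 1 P, i ≤ j → b i ≤ b j) {j : ℕ} (hj : j ∈ Icc 1 P) :
    waterFill (Icc 1 P) a b (b j) = ∑ i ∈ Icc 1 j, (b j - b i) / a i := by
  have hsub : Icc 1 j ⊆ Icc 1 P := Icc_subset_Icc le_rfl (mem_Icc.1 hj).2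
  rw [waterFill, ← sum_subset hsub fun i hiP hij => ?_]
  · refine sum_congr rfl fun i hi => ?_
    rw [max_eq_right (sub_nonneg.2 (hsort i (hsub hi) j hj (mem_Icc.1 hi).2))]
  · have hji : j ≤ i := by simp only [mem_Icc, not_and, not_le] at hiP hij; omega
    rw [max_eq_left (sub_nonpos.2 (hsort j hj i hiP hji)), zero_div]

theorem sub_div_sum_Icc_neg_iff (ha : ∀ i ∈ Icc 1 P, 0 < a i)
    (hsort : ∀ i ∈ Icc 1 P, ∀ j ∈ Icc 1 P, i ≤ j → b i ≤ b j) {ν : ℝ}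
    (hν : waterFill (Icc 1 P) a b ν = 2) {j : ℕ} (hj : j ∈ Icc 1 P) :
    b j - (2 + ∑ i ∈ Icc 1 j, b i / a i) / (∑ i ∈ Icc 1 j, 1 / a i) < 0 ↔ b j < ν := by
  have hS : 0 < ∑ i ∈ Icc 1 j, 1 / a i := sum_pos
    (fun i hi => one_div_pos.2 (ha i (Icc_subset_Icc le_rfl (mem_Icc.1 hj).2 hi)))
    (nonempty_Icc.2 (mem_Icc.1 hj).1)
  rw [sub_div_sum_neg_iff _ hS, ← waterFill_Icc_of_sorted hsort hj, ← hν,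
    waterFill_lt_waterFill_iff ha hj]

theorem filter_Icc_one_eq_Icc_card {q : ℕ → Prop} [DecidablePred q]
    (hq : ∀ i j, 1 ≤ i → i ≤ j → j ≤ P → q j → q i) :
    (Icc 1 P).filter q = Icc 1 ((Icc 1 P).filter q).card := by
  refine eq_of_subset_of_card_le (fun p hp => ?_) (by simp)
  obtain ⟨hpP, hqp⟩ := mem_filter.1 hp
  have hsub : Icc 1 p ⊆ (Icc 1 P).filter q := fun i hi => by
    obtain ⟨hi1, hip⟩ := mem_Icc.1 hi
    exact mem_filter.2 ⟨mem_Icc.2 ⟨hi1, hip.trans (mem_Icc.1 hpP).2⟩,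
      hq i p hi1 hip (mem_Icc.1 hpP).2 hqp⟩
  have := card_le_card hsub
  rw [Nat.card_Icc] at this
  exact mem_Icc.2 ⟨(mem_Icc.1 hpP).1, by omega⟩

end Sorted

theorem Nat.sSup_Icc_one (n : ℕ) : sSup (Set.Icc 1 n) = n := by
  rcases n.eq_zero_or_pos with rfl | hn
  · simp
  · exact csSup_Icc hn

theorem simplex_qp_rho_characterization_general
    (P ρ : ℕ) (a b : ℕ → ℝ) (θ : ℕ → ℝ)
    (ha : ∀ i ∈ Finset.Icc 1 P, 0 < a i)
    (hsort : ∀ i ∈ Finset.Icc 1 P, ∀ j ∈ Finset.Icc 1 P, i ≤ j → b i ≤ b j)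
    (hθmem : θ ∈ {t : ℕ → ℝ | (∀ i, 0 ≤ t i) ∧ (∀ i, i ∉ Finset.Icc 1 P → t i = 0) ∧
      ∑ i ∈ Finset.Icc 1 P, t i = 1})
    (hmin : IsMinOn (fun t : ℕ → ℝ => ∑ i ∈ Finset.Icc 1 P, (a i * t i ^ 2 + b i * t i))
      {t : ℕ → ℝ | (∀ i, 0 ≤ t i) ∧ (∀ i, i ∉ Finset.Icc 1 P → t i = 0) ∧
        ∑ i ∈ Finset.Icc 1 P, t i = 1} θ)
    (hρ : ρ = ((Finset.Icc 1 P).filter (fun p => 0 < θ p)).card) :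
    ρ = sSup {j : ℕ | 1 ≤ j ∧ j ≤ P ∧
      b j - (2 + ∑ i ∈ Finset.Icc 1 j, b i / a i) / (∑ i ∈ Finset.Icc 1 j, 1 / a i)
        < 0} := by
  obtain ⟨ν, hν⟩ := exists_waterLevel_of_isMinOn_simplexOn hmin hθmem fun i hi => (ha i hi).le
  have hfill : waterFill (Icc 1 P) a b ν = 2 := waterFill_eq_two ha hθmem.2.2 hν
  have hsupp : (Icc 1 P).filter (fun p => 0 < θ p) = (Icc 1 P).filter (fun p => b p < ν) :=
    filter_congr fun p hp => pos_iff_lt_of_two_mul_eq_max (ha p hp) (hν p hp)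
  have hinit : (Icc 1 P).filter (fun p => b p < ν) = Icc 1 ρ := by
    rw [hρ, hsupp]
    refine filter_Icc_one_eq_Icc_card fun i j hi hij hjP hj => (hsort i ?_ j ?_ hij).trans_lt hj
    all_goals simp only [mem_Icc]; omega
  have hset : {j : ℕ | 1 ≤ j ∧ j ≤ P ∧ b j - (2 + ∑ i ∈ Icc 1 j, b i / a i) /
      (∑ i ∈ Icc 1 j, 1 / a i) < 0} = Set.Icc 1 ρ := by
    rw [← coe_Icc, ← hinit]
    ext j
    simp only [Set.mem_ofPred_eq, coe_filter, mem_Icc, and_assoc]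
    exact and_congr_right fun h1 => and_congr_right fun hjP =>
      sub_div_sum_Icc_neg_iff ha hsort hfill (mem_Icc.2 ⟨h1, hjP⟩)
  rw [hset, Nat.sSup_Icc_one]

/-- Theorem S.1: with `b` sorted ascending (and `a` rearranged
accordingly, `a i > 0`), the number `ρ` of strictly positive components of the unique
minimizer of `θᵀ diag(a) θ + bᵀ θ` over the simplex equals
`max { 1 ≤ j ≤ P : b j - (2 + ∑_{i=1}^j b i / a i) / (∑_{i=1}^j 1 / a i) < 0 }`. -/
theorem simplex_qp_rho_characterization
    (P ρ : ℕ) (a b : ℕ → ℝ) (θ : ℕ → ℝ)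
    (hP : 1 ≤ P)
    (ha : ∀ i ∈ Finset.Icc 1 P, 0 < a i)
    (hsort : ∀ i ∈ Finset.Icc 1 P, ∀ j ∈ Finset.Icc 1 P, i ≤ j → b i ≤ b j)
    (hθmem : θ ∈ {t : ℕ → ℝ | (∀ i, 0 ≤ t i) ∧ (∀ i, i ∉ Finset.Icc 1 P → t i = 0) ∧
      ∑ i ∈ Finset.Icc 1 P, t i = 1})
    (hmin : IsMinOn (fun t : ℕ → ℝ => ∑ i ∈ Finset.Icc 1 P, (a i * t i ^ 2 + b i * t i))
      {t : ℕ → ℝ | (∀ i, 0 ≤ t i) ∧ (∀ i, i ∉ Finset.Icc 1 P → t i = 0) ∧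
        ∑ i ∈ Finset.Icc 1 P, t i = 1} θ)
    (hρ : ρ = ((Finset.Icc 1 P).filter (fun p => 0 < θ p)).card) :
    ρ = sSup {j : ℕ | 1 ≤ j ∧ j ≤ P ∧
      b j - (2 + ∑ i ∈ Finset.Icc 1 j, b i / a i) / (∑ i ∈ Finset.Icc 1 j, 1 / a i)
        < 0} :=
  simplex_qp_rho_characterization_general P ρ a b θ ha hsort hθmem hmin hρ
end

section
/- Define φ_j = b_j − (2 + ∑_{i=1}^j b_i/a_i)/(∑_{i=1}^j 1/a_i) with a_i > 0 and b sorted ascending. If for some ρ and μ we have b_i + μ < 0 for i ≤ ρ, b_i + μ ≥ 0 for i > ρ, and μ = −(2+∑_{i=1}^ρ b_i/a_i)/(∑_{i=1}^ρ 1/a_i), then φ_j < 0 for all j ≤ ρ. -/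
/-!
With `s_j = ∑_{i ≤ j} 1 / a_i` and `T_j = ∑_{i ≤ j} b_i / a_i`, the formula for `μ` says exactly
`2 + ∑_{i ≤ ρ} (b_i + μ) / a_i = 0`. All terms of this sum are negative, so dropping those with
`j < i ≤ ρ` can only increase it: `2 + T_j + μ s_j ≥ 0`, that is `(2 + T_j) / s_j ≥ -μ > b_j`.
-/

open Finset

section WeightedThreshold

variable {ι : Type*} (a b : ι → ℝ) (μ : ℝ)

theorem sum_add_div_eq (s : Finset ι) :
    ∑ i ∈ s, (b i + μ) / a i = ∑ i ∈ s, b i / a i + μ * ∑ i ∈ s, 1 / a i := by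
  simp only [add_div, sum_add_distrib, mul_sum, mul_one_div]

variable {a b μ}

theorem sum_one_div_pos {s : Finset ι} (ha : ∀ i ∈ s, 0 < a i) (hs : s.Nonempty) :
    0 < ∑ i ∈ s, 1 / a i :=
  sum_pos (fun i hi => one_div_pos.mpr (ha i hi)) hs

theorem add_sum_add_div_eq_zero {s : Finset ι} {c : ℝ} (hs : ∑ i ∈ s, 1 / a i ≠ 0)
    (hμ : μ = -(c + ∑ i ∈ s, b i / a i) / ∑ i ∈ s, 1 / a i) :
    c + ∑ i ∈ s, (b i + μ) / a i = 0 := by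
  rw [sum_add_div_eq, hμ]
  field_simp
  ring

theorem lt_div_of_add_sum_add_div_nonneg {s : Finset ι} {c x : ℝ} (hs : 0 < ∑ i ∈ s, 1 / a i)
    (hx : x + μ < 0) (h : 0 ≤ c + ∑ i ∈ s, (b i + μ) / a i) :
    x < (c + ∑ i ∈ s, b i / a i) / ∑ i ∈ s, 1 / a i := by
  rw [sum_add_div_eq] at h
  rw [lt_div_iff₀ hs]
  nlinarith

theorem lt_div_of_subset_of_add_neg {s t : Finset ι} {c : ℝ} (hst : s ⊆ t)
    (ha : ∀ i ∈ t, 0 < a i) (hneg : ∀ i ∈ t, b i + μ < 0)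
    (hμ : μ = -(c + ∑ i ∈ t, b i / a i) / ∑ i ∈ t, 1 / a i) {j : ι} (hj : j ∈ s) :
    b j < (c + ∑ i ∈ s, b i / a i) / ∑ i ∈ s, 1 / a i := by
  have hbalance : c + ∑ i ∈ t, (b i + μ) / a i = 0 :=
    add_sum_add_div_eq_zero (sum_one_div_pos ha ⟨j, hst hj⟩).ne' hμ
  have hdrop : ∑ i ∈ t, (b i + μ) / a i ≤ ∑ i ∈ s, (b i + μ) / a i :=
    sum_le_sum_of_subset_of_nonpos' hst fun i hi _ =>
      (div_neg_of_neg_of_pos (hneg i hi) (ha i hi)).le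
  exact lt_div_of_add_sum_add_div_nonneg
    (sum_one_div_pos (fun i hi => ha i (hst hi)) ⟨j, hj⟩) (hneg j (hst hj)) (by linarith)

end WeightedThreshold

theorem phi_neg_below_rho_general
    (P ρ : ℕ) (a b : ℕ → ℝ) (μ : ℝ)
    (hρP : ρ ≤ P)
    (ha : ∀ i ∈ Finset.Icc 1 P, 0 < a i)
    (hneg : ∀ i, 1 ≤ i → i ≤ ρ → b i + μ < 0)
    (hμ : μ = -(2 + ∑ i ∈ Finset.Icc 1 ρ, b i / a i) / (∑ i ∈ Finset.Icc 1 ρ, 1 / a i)) :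
    ∀ j, 1 ≤ j → j ≤ ρ →
      b j - (2 + ∑ i ∈ Finset.Icc 1 j, b i / a i) / (∑ i ∈ Finset.Icc 1 j, 1 / a i)
        < 0 := by
  intro j hj1 hjρ
  refine sub_neg.mpr (lt_div_of_subset_of_add_neg (Icc_subset_Icc_right hjρ) ?_ ?_ hμ
    (mem_Icc.mpr ⟨hj1, le_rfl⟩))
  · exact fun i hi => ha i (Icc_subset_Icc_right hρP hi)
  · exact fun i hi => hneg i (mem_Icc.mp hi).1 (mem_Icc.mp hi).2

/-- the `j ≤ ρ` part of the proof of Theorem S.1: under the KKT sign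
conditions and the formula (S.8) for `μ`, the quantity
`φ j = b j - (2 + ∑_{i=1}^j b i / a i) / (∑_{i=1}^j 1 / a i)` is negative for all
`1 ≤ j ≤ ρ`. -/
theorem phi_neg_below_rho
    (P ρ : ℕ) (a b : ℕ → ℝ) (μ : ℝ)
    (hρ1 : 1 ≤ ρ) (hρP : ρ ≤ P)
    (ha : ∀ i ∈ Finset.Icc 1 P, 0 < a i)
    (hsort : ∀ i ∈ Finset.Icc 1 P, ∀ j ∈ Finset.Icc 1 P, i ≤ j → b i ≤ b j)
    (hneg : ∀ i, 1 ≤ i → i ≤ ρ → b i + μ < 0)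
    (hnonneg : ∀ i, ρ < i → i ≤ P → 0 ≤ b i + μ)
    (hμ : μ = -(2 + ∑ i ∈ Finset.Icc 1 ρ, b i / a i) / (∑ i ∈ Finset.Icc 1 ρ, 1 / a i)) :
    ∀ j, 1 ≤ j → j ≤ ρ →
      b j - (2 + ∑ i ∈ Finset.Icc 1 j, b i / a i) / (∑ i ∈ Finset.Icc 1 j, 1 / a i)
        < 0 :=
  phi_neg_below_rho_general P ρ a b μ hρP ha hneg hμ
end
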